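/- arXiv:2108.02770 — 3 statements merged into one kernel-verified Lean document; each statement's English description precedes it below -/
import Mathlib

section
/- For every feasible schedule S of a finite DAG G = (V,E) on M identical machines with communication delay ρ (duplication allowed), the makespan of S is at least (L−1)·ρ, where L is the largest index such that the layer V_L of the ρ-layering of G is nonempty. -/
/-- Ancestors of `v` in the digraph with edge relation `E`:
all `u` with a directed path (possibly of length 0) from `u` to `v`. -/
def Anc {V : Type*} (E : V → V → Prop) (v : V) : Set V :=
  {u | Relation.ReflTransGen E u v}

/-- `cum E ρ i` is the union `V_1 ∪ … ∪ V_i` of the first `i` layers of the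
ρ-layering of the digraph. -/
def cum {V : Type*} (E : V → V → Prop) (ρ : ℕ) : ℕ → Set V
  | 0 => ∅
  | i + 1 => cum E ρ i ∪ {v | v ∉ cum E ρ i ∧ (Anc E v \ cum E ρ i).ncard ≤ ρ}

/-- The `i`-th layer `V_i` of the ρ-layering (so `layer E ρ 0 = ∅`). -/
def layer {V : Type*} (E : V → V → Prop) (ρ : ℕ) (i : ℕ) : Set V :=
  cum E ρ i \ cum E ρ (i - 1)

/-- Feasibility of a schedule-with-duplication `S` (a finite set of triples
(machine, job, start time)) for precedence relation `E`, `M` machines and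
communication delay `ρ`. -/
def Feasible {V : Type*} (E : V → V → Prop) (M ρ : ℕ)
    (S : Finset (ℕ × V × ℕ)) : Prop :=
  (∀ x ∈ S, x.1 < M) ∧
  (∀ v : V, ∃ m t, (m, v, t) ∈ S) ∧
  (∀ x ∈ S, ∀ y ∈ S, x ≠ y → ¬(x.1 = y.1 ∧ x.2.2 = y.2.2)) ∧
  (∀ x ∈ S, ∀ u : V, E u x.2.1 →
    ∃ y ∈ S, y.2.1 = u ∧
      ((y.1 = x.1 ∧ y.2.2 + 1 ≤ x.2.2) ∨ y.2.2 + 1 + ρ ≤ x.2.2))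

/-- The makespan of a schedule: `1 + max t` over its triples (0 if empty). -/
def makespan {V : Type*} (S : Finset (ℕ × V × ℕ)) : ℕ :=
  S.sup (fun x => x.2.2 + 1)

/-!
A copy of a job `v` lying outside `V_1 ∪ … ∪ V_i` never starts before time `i * ρ`. By induction
on `i`: such a `v` has at least `ρ` proper ancestors outside the first `i - 1` layers, and each of
them has a copy starting no earlier than `(i - 1) * ρ`, either on `v`'s machine before `v` or at
least `ρ + 1` slots before `v`. If any copy of the second kind exists we are done at once;
otherwise the `ρ` copies occupy distinct slots of `v`'s machine between `(i - 1) * ρ` and the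
start of `v`. Applied to a job of `V_L`, this bounds the makespan.
-/

section Schedule

variable {V : Type*} {E : V → V → Prop} {M ρ : ℕ} {S : Finset (ℕ × V × ℕ)}

theorem notMem_cum_succ_iff {i : ℕ} {v : V} :
    v ∉ cum E ρ (i + 1) ↔ v ∉ cum E ρ i ∧ ρ < (Anc E v \ cum E ρ i).ncard := by
  simp only [cum, Set.mem_union, Set.mem_ofPred_eq, not_or, not_and, not_le]
  tauto

theorem le_makespan {m : ℕ} {v : V} {t : ℕ} (hx : (m, v, t) ∈ S) : t + 1 ≤ makespan S :=
  Finset.le_sup (f := fun x => x.2.2 + 1) hx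

namespace Feasible

theorem exists_copy_of_edge (hS : Feasible E M ρ S) {u v : V} (huv : E u v) {m t : ℕ}
    (hx : (m, v, t) ∈ S) :
    ∃ m' t', (m', u, t') ∈ S ∧ ((m' = m ∧ t' < t) ∨ t' + 1 + ρ ≤ t) := by
  obtain ⟨⟨m', u', t'⟩, hy, rfl, hy_before⟩ := hS.2.2.2 _ hx u huv
  dsimp only at hy_before
  exact ⟨m', t', hy, by omega⟩

theorem exists_copy_of_transGen (hS : Feasible E M ρ S) {u v : V}
    (huv : Relation.TransGen E u v) {m t : ℕ} (hx : (m, v, t) ∈ S) :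
    ∃ m' t', (m', u, t') ∈ S ∧ ((m' = m ∧ t' < t) ∨ t' + 1 + ρ ≤ t) := by
  induction huv generalizing m t with
  | single huv => exact hS.exists_copy_of_edge huv hx
  | tail _ hwv ih =>
    obtain ⟨m₁, t₁, hw, hw_before⟩ := hS.exists_copy_of_edge hwv hx
    obtain ⟨m₂, t₂, hu, hu_before⟩ := ih hw
    refine ⟨m₂, t₂, hu, ?_⟩
    rcases hu_before with ⟨rfl, _⟩ | _ <;> rcases hw_before with ⟨rfl, _⟩ | _
    · exact Or.inl ⟨rfl, by omega⟩
    all_goals exact Or.inr (by omega)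

theorem ncard_le_of_copies_on_machine (hS : Feasible E M ρ S) {B : Set V} {m a b : ℕ}
    (hB : ∀ u ∈ B, ∃ t, (m, u, t) ∈ S ∧ t ∈ Set.Ico a b) :
    B.ncard ≤ b - a := by
  choose! time hcopy hslot using hB
  have hinj : Set.InjOn time B := by
    intro u₁ hu₁ u₂ hu₂ htime
    by_contra hne
    exact hS.2.2.1 _ (hcopy u₁ hu₁) _ (hcopy u₂ hu₂) (by simp [hne]) ⟨rfl, htime⟩
  calc B.ncard ≤ (Set.Ico a b).ncard := Set.ncard_le_ncard_of_injOn time hslot hinj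
    _ = b - a := by rw [← Finset.coe_Ico, Set.ncard_coe_finset, Nat.card_Ico]

theorem mul_le_of_notMem_cum (hS : Feasible E M ρ S) (i : ℕ) {m : ℕ} {v : V} {t : ℕ}
    (hx : (m, v, t) ∈ S) (hv : v ∉ cum E ρ i) : i * ρ ≤ t := by
  induction i generalizing m v t with
  | zero => simp
  | succ i ih =>
    obtain ⟨hv, hcard⟩ := notMem_cum_succ_iff.mp hv
    by_contra! ht
    set B := (Anc E v \ cum E ρ i) \ {v}
    have hB : ρ ≤ B.ncard := by
      have hvA : v ∈ Anc E v \ cum E ρ i := ⟨Relation.ReflTransGen.refl, hv⟩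
      rw [Set.ncard_sdiff_singleton_of_mem hvA]
      omega
    -- A copy of a proper ancestor at least `ρ + 1` slots earlier would already force `t ≥ (i+1)ρ`.
    have hsame : ∀ u ∈ B, ∃ t', (m, u, t') ∈ S ∧ t' ∈ Set.Ico (i * ρ) t := by
      rintro u ⟨⟨hanc, hu⟩, hne⟩
      have hpath : Relation.TransGen E u v :=
        (Relation.reflTransGen_iff_eq_or_transGen.mp hanc).resolve_left (Ne.symm hne)
      obtain ⟨m', t', hy, hy_before⟩ := hS.exists_copy_of_transGen hpath hx
      have hy_late := ih hy hu
      rcases hy_before with ⟨rfl, hlt⟩ | hfar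
      · exact ⟨t', hy, hy_late, hlt⟩
      · rw [Nat.succ_mul] at ht
        omega
    have hB_le := hS.ncard_le_of_copies_on_machine hsame
    have hv_late := ih hx hv
    rw [Nat.succ_mul] at ht
    omega

end Feasible

end Schedule

theorem makespan_lower_bound_layers_general {V : Type*}
    (E : V → V → Prop)
    (M ρ : ℕ)
    (S : Finset (ℕ × V × ℕ)) (hS : Feasible E M ρ S)
    (L : ℕ) (hLne : (layer E ρ L).Nonempty) :
    (L - 1) * ρ ≤ makespan S := by
  obtain ⟨v, -, hv⟩ := hLne
  obtain ⟨m, t, hx⟩ := hS.2.1 v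
  have hstart := hS.mul_le_of_notMem_cum (L - 1) hx hv
  have hend := le_makespan hx
  omega

/-- any feasible schedule has makespan at least `(L-1)·ρ`, where
`L` is the largest index of a nonempty layer of the ρ-layering. -/
theorem makespan_lower_bound_layers {V : Type*} [Fintype V]
    (E : V → V → Prop) (hacyc : ∀ v, ¬ Relation.TransGen E v v)
    (M ρ : ℕ) (hM : 1 ≤ M) (hρ : 1 ≤ ρ)
    (S : Finset (ℕ × V × ℕ)) (hS : Feasible E M ρ S)
    (L : ℕ) (hLne : (layer E ρ L).Nonempty)
    (hLmax : ∀ i, L < i → layer E ρ i = ∅) :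
    (L - 1) * ρ ≤ makespan S :=
  makespan_lower_bound_layers_general E M ρ S hS L hLne
end

section
/- Let S be a feasible schedule of a finite DAG G = (V,E) on M identical machines with communication delay ρ (duplication allowed), and let V_1, V_2, … be the ρ-layering of G. Then for every i ≥ 0 and every triple (m, v, t) ∈ S with v ∉ V_1 ∪ … ∪ V_i, the start time satisfies t ≥ i·ρ. -/
/-!
Induct on `i`. If `v ∉ V_1 ∪ … ∪ V_{i+1}`, then `v` has at least `ρ` proper ancestors outside
`V_1 ∪ … ∪ V_i`, and each of them has, by induction, only copies starting at time `≥ iρ`.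
A copy of `v` starting at `t < (i+1)ρ` cannot wait for the communication delay after any of
them, so it needs a copy of each on its own machine in the window `[iρ, t)`, which holds fewer
than `ρ` slots.
-/

def Feeds {V : Type*} (ρ : ℕ) (y x : ℕ × V × ℕ) : Prop :=
  (y.1 = x.1 ∧ y.2.2 + 1 ≤ x.2.2) ∨ y.2.2 + 1 + ρ ≤ x.2.2

theorem Feeds.trans {V : Type*} {ρ : ℕ} {z y x : ℕ × V × ℕ} (hzy : Feeds ρ z y)
    (hyx : Feeds ρ y x) : Feeds ρ z x := by
  unfold Feeds at *
  rcases hzy with ⟨hm, ht⟩ | ht <;> rcases hyx with ⟨hm', ht'⟩ | ht'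
  · exact Or.inl ⟨hm.trans hm', by omega⟩
  all_goals exact Or.inr (by omega)

theorem le_ncard_properAnc_diff_cum {V : Type*} {E : V → V → Prop} {ρ i : ℕ} {v : V}
    (hv : v ∉ cum E ρ (i + 1)) : ρ ≤ ((Anc E v \ cum E ρ i) \ {v}).ncard := by
  have hlt : ρ < (Anc E v \ cum E ρ i).ncard := by
    by_contra! hle
    exact hv (Or.inr ⟨fun h => hv (Or.inl h), hle⟩)
  have hpred := Set.pred_ncard_le_ncard_sdiff_singleton (Anc E v \ cum E ρ i) v
  omega

namespace Feasible

variable {V : Type*} {E : V → V → Prop} {M ρ : ℕ} {S : Finset (ℕ × V × ℕ)}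

theorem exists_feeds (hS : Feasible E M ρ S) {x : ℕ × V × ℕ} (hx : x ∈ S) {u : V}
    (hu : E u x.2.1) : ∃ y ∈ S, y.2.1 = u ∧ Feeds ρ y x :=
  hS.2.2.2 x hx u hu

theorem eq_of_machine_eq_of_start_eq (hS : Feasible E M ρ S) {x y : ℕ × V × ℕ} (hx : x ∈ S)
    (hy : y ∈ S) (hm : x.1 = y.1) (ht : x.2.2 = y.2.2) : x = y :=
  by_contra fun hne => hS.2.2.1 x hx y hy hne ⟨hm, ht⟩

theorem exists_feeds_of_transGen (hS : Feasible E M ρ S) {x : ℕ × V × ℕ} (hx : x ∈ S) {u : V}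
    (hu : Relation.TransGen E u x.2.1) : ∃ y ∈ S, y.2.1 = u ∧ Feeds ρ y x := by
  induction hu using Relation.TransGen.head_induction_on with
  | single h => exact hS.exists_feeds hx h
  | head hac _ ih =>
    obtain ⟨z, hz, rfl, hzx⟩ := ih
    obtain ⟨y, hy, hyu, hyz⟩ := hS.exists_feeds hz hac
    exact ⟨y, hy, hyu, hyz.trans hzx⟩

theorem ncard_le_of_forall_copy_mem_Ico (hS : Feasible E M ρ S) {A : Set V} {m a b : ℕ}
    (hA : ∀ u ∈ A, ∃ y ∈ S, y.1 = m ∧ y.2.1 = u ∧ y.2.2 ∈ Set.Ico a b) :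
    A.ncard ≤ b - a := by
  choose! f hfS hfm hfu hft using hA
  have hinj : Set.InjOn (fun u => (f u).2.2) A := by
    intro u hu w hw htime
    have hcopy : f u = f w := hS.eq_of_machine_eq_of_start_eq (hfS u hu) (hfS w hw)
      ((hfm u hu).trans (hfm w hw).symm) htime
    rw [← hfu u hu, ← hfu w hw, hcopy]
  calc A.ncard ≤ (Set.Ico a b).ncard := Set.ncard_le_ncard_of_injOn _ hft hinj
    _ = b - a := Set.ncard_Ico_nat a b

theorem succ_mul_le_start (hS : Feasible E M ρ S) {i : ℕ}
    (ih : ∀ y ∈ S, y.2.1 ∉ cum E ρ i → i * ρ ≤ y.2.2) {x : ℕ × V × ℕ} (hx : x ∈ S)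
    (hv : x.2.1 ∉ cum E ρ (i + 1)) : (i + 1) * ρ ≤ x.2.2 := by
  by_contra! hearly
  rw [Nat.succ_mul] at hearly
  have hlocal : ∀ u ∈ (Anc E x.2.1 \ cum E ρ i) \ {x.2.1},
      ∃ y ∈ S, y.1 = x.1 ∧ y.2.1 = u ∧ y.2.2 ∈ Set.Ico (i * ρ) x.2.2 := by
    rintro u ⟨⟨hanc, hu⟩, hne⟩
    have hproper : Relation.TransGen E u x.2.1 :=
      (Relation.reflTransGen_iff_eq_or_transGen.mp hanc).resolve_left (Ne.symm hne)
    obtain ⟨y, hy, rfl, hyx⟩ := hS.exists_feeds_of_transGen hx hproper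
    have hstart := ih y hy hu
    rcases hyx with ⟨hm, ht⟩ | ht
    · exact ⟨y, hy, hm, rfl, hstart, ht⟩
    · omega
  have hcount := hS.ncard_le_of_forall_copy_mem_Ico hlocal
  have hmany := le_ncard_properAnc_diff_cum hv
  have hlate := ih x hx fun h => hv (Or.inl h)
  omega

end Feasible

theorem start_time_lower_bound_layers_general {V : Type*} (E : V → V → Prop) (M ρ : ℕ)
    (S : Finset (ℕ × V × ℕ)) (hS : Feasible E M ρ S)
    (i : ℕ) (x : ℕ × V × ℕ) (hx : x ∈ S) (hv : x.2.1 ∉ cum E ρ i) :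
    i * ρ ≤ x.2.2 := by
  induction i generalizing x with
  | zero => simp
  | succ i ih => exact hS.succ_mul_le_start ih hx hv

/-- in any feasible schedule, every copy of a job lying outside
the first `i` layers `V_1 ∪ … ∪ V_i` of the ρ-layering starts no earlier than
time `i·ρ`. -/
theorem start_time_lower_bound_layers {V : Type*} [Fintype V]
    (E : V → V → Prop) (hacyc : ∀ v, ¬ Relation.TransGen E v v)
    (M ρ : ℕ) (hM : 1 ≤ M) (hρ : 1 ≤ ρ)
    (S : Finset (ℕ × V × ℕ)) (hS : Feasible E M ρ S)
    (i : ℕ) (x : ℕ × V × ℕ) (hx : x ∈ S) (hv : x.2.1 ∉ cum E ρ i) :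
    i * ρ ≤ x.2.2 :=
  start_time_lower_bound_layers_general E M ρ S hS i x hx hv
end

section
/- Let G = (V,E) be a finite DAG, ρ ≥ 1 an integer, and let L be the largest index of a nonempty layer of the ρ-layering V_1, V_2, … of G. Suppose W_1, W_2, … are pairwise disjoint subsets of V such that, for every i ≥ 1, writing G_i for the induced subgraph of G on V ∖ (W_1 ∪ … ∪ W_{i−1}): W_i is ancestor-closed in G_i, and W_i contains every vertex v of G_i whose ancestor set in G_i has size at most ρ. Then W_1 ∪ … ∪ W_L = V. -/
/-- Ancestors of `v` in the subgraph induced on the vertex set `W`: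
all `u` with a directed path from `u` to `v` staying inside `W`. -/
def AncIn {V : Type*} (E : V → V → Prop) (W : Set V) (v : V) : Set V :=
  {u | Relation.ReflTransGen (fun a b => E a b ∧ a ∈ W ∧ b ∈ W) u v}

/-!
Every phase removes at least the current ρ-layer: a vertex of `V_{i+1}` that survives the
first `i` phases has, in the remaining graph, only ancestors outside `V_1 ∪ … ∪ V_i`, hence at
most `ρ` of them, so phase `i + 1` must take it. Thus `W_1 ∪ … ∪ W_i ⊇ V_1 ∪ … ∪ V_i`, and the
layering exhausts `V` by step `L`, since acyclicity and `ρ ≥ 1` let it always take a source of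
the remaining graph.
-/

section Layering

variable {V : Type*} (E : V → V → Prop) (ρ : ℕ)

def peeled (W : ℕ → Set V) (i : ℕ) : Set V :=
  ⋃ j ∈ Finset.Icc 1 i, W j

lemma peeled_succ (W : ℕ → Set V) (i : ℕ) : peeled W (i + 1) = peeled W i ∪ W (i + 1) := by
  ext v
  simp only [peeled, Set.mem_union, Set.mem_iUnion, Finset.mem_Icc, exists_prop]
  constructor
  · rintro ⟨j, ⟨hj1, hj⟩, hv⟩
    rcases Nat.lt_or_eq_of_le hj with hj | rfl
    · exact Or.inl ⟨j, ⟨hj1, Nat.le_of_lt_succ hj⟩, hv⟩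
    · exact Or.inr hv
  · rintro (⟨j, ⟨hj1, hj⟩, hv⟩ | hv)
    · exact ⟨j, ⟨hj1, hj.trans i.le_succ⟩, hv⟩
    · exact ⟨i + 1, ⟨i.succ_pos, le_rfl⟩, hv⟩

lemma AncIn_subset_Anc_inter {C : Set V} {v : V} (hv : v ∈ C) : AncIn E C v ⊆ Anc E v ∩ C := by
  intro u hu
  refine ⟨Relation.ReflTransGen.mono (fun _ _ hab => hab.1) _ _ hu, ?_⟩
  rcases hu.cases_head with rfl | ⟨c, hc, _⟩
  exacts [hv, hc.2.1]

lemma exists_mem_Anc_inter_subset_singleton [Finite V] (hacyc : ∀ v, ¬ Relation.TransGen E v v)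
    {S : Set V} (hS : S.Nonempty) : ∃ v ∈ S, Anc E v ∩ S ⊆ {v} := by
  have : Std.Irrefl (Relation.TransGen E) := ⟨hacyc⟩
  obtain ⟨v, hv, hmin⟩ := (Finite.wellFounded_of_trans_of_irrefl (Relation.TransGen E)).has_min S hS
  refine ⟨v, hv, fun u ⟨hu, huS⟩ => ?_⟩
  rcases Relation.reflTransGen_iff_eq_or_transGen.mp hu with rfl | h
  exacts [rfl, absurd h (hmin u huS)]

lemma cum_ssubset_cum_succ [Finite V] (hacyc : ∀ v, ¬ Relation.TransGen E v v) (hρ : 1 ≤ ρ)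
    {i : ℕ} (hi : cum E ρ i ≠ Set.univ) : cum E ρ i ⊂ cum E ρ (i + 1) := by
  obtain ⟨v, hv, hsrc⟩ :=
    exists_mem_Anc_inter_subset_singleton E hacyc (Set.nonempty_compl.mpr hi)
  have hcard : (Anc E v \ cum E ρ i).ncard ≤ ρ :=
    calc (Anc E v \ cum E ρ i).ncard ≤ ({v} : Set V).ncard :=
          Set.ncard_le_ncard hsrc (Set.finite_singleton v)
      _ = 1 := Set.ncard_singleton v
      _ ≤ ρ := hρ
  exact ⟨Set.subset_union_left, fun hsub => hv (hsub (Or.inr ⟨hv, hcard⟩))⟩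

lemma cum_eq_univ_of_layer_succ_eq_empty [Finite V] (hacyc : ∀ v, ¬ Relation.TransGen E v v)
    (hρ : 1 ≤ ρ) {L : ℕ} (hL : layer E ρ (L + 1) = ∅) : cum E ρ L = Set.univ := by
  by_contra hne
  have hsub : cum E ρ (L + 1) ⊆ cum E ρ L := Set.sdiff_eq_empty.mp hL
  exact (cum_ssubset_cum_succ E ρ hacyc hρ hne).not_subset hsub

lemma cum_subset_peeled [Finite V] {W : ℕ → Set V}
    (hsmall : ∀ i, ∀ v ∈ (peeled W i)ᶜ, (AncIn E (peeled W i)ᶜ v).ncard ≤ ρ → v ∈ W (i + 1))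
    (i : ℕ) : cum E ρ i ⊆ peeled W i := by
  induction i with
  | zero => exact Set.empty_subset _
  | succ i ih =>
    rw [peeled_succ]
    rintro v (hv | ⟨-, hcard⟩)
    · exact Or.inl (ih hv)
    by_cases hvW : v ∈ peeled W i
    · exact Or.inl hvW
    have hanc : AncIn E (peeled W i)ᶜ v ⊆ Anc E v \ cum E ρ i := fun u hu =>
      have hu' := AncIn_subset_Anc_inter E hvW hu
      ⟨hu'.1, fun hcum => hu'.2 (ih hcum)⟩
    exact Or.inr (hsmall i v hvW ((Set.ncard_le_ncard hanc (Set.toFinite _)).trans hcard))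

end Layering

theorem peeling_covers_in_L_phases_general {V : Type*} [Fintype V]
    (E : V → V → Prop) (hacyc : ∀ v, ¬ Relation.TransGen E v v)
    (ρ : ℕ) (hρ : 1 ≤ ρ)
    (L : ℕ)
    (hLmax : ∀ i, L < i → layer E ρ i = ∅)
    (W : ℕ → Set V)
    (hsmall : ∀ i, 1 ≤ i → ∀ v ∈ (⋃ j ∈ Finset.Icc 1 (i - 1), W j)ᶜ,
      (AncIn E (⋃ j ∈ Finset.Icc 1 (i - 1), W j)ᶜ v).ncard ≤ ρ → v ∈ W i) :
    (⋃ j ∈ Finset.Icc 1 L, W j) = Set.univ := by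
  have hcum : cum E ρ L = Set.univ :=
    cum_eq_univ_of_layer_succ_eq_empty E ρ hacyc hρ (hLmax (L + 1) L.lt_succ_self)
  have hcover : cum E ρ L ⊆ peeled W L :=
    cum_subset_peeled E ρ (fun i => hsmall (i + 1) i.succ_pos) L
  exact Set.eq_univ_of_univ_subset (hcum ▸ hcover)

/-- if pairwise disjoint sets `W 1, W 2, …` are peeled off so that
each `W i` is ancestor-closed in the graph `G i` induced on the not-yet-peeled
vertices and contains every vertex of `G i` with at most `ρ` ancestors in `G i`,
then the first `L` of them cover all of `V`, where `L` is the largest index of a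
nonempty layer of the ρ-layering of `G`. -/
theorem peeling_covers_in_L_phases {V : Type*} [Fintype V]
    (E : V → V → Prop) (hacyc : ∀ v, ¬ Relation.TransGen E v v)
    (ρ : ℕ) (hρ : 1 ≤ ρ)
    (L : ℕ) (hLne : (layer E ρ L).Nonempty)
    (hLmax : ∀ i, L < i → layer E ρ i = ∅)
    (W : ℕ → Set V)
    (hdisj : ∀ i j, 1 ≤ i → 1 ≤ j → i ≠ j → Disjoint (W i) (W j))
    (hclosed : ∀ i, 1 ≤ i → ∀ v ∈ W i,
      AncIn E (⋃ j ∈ Finset.Icc 1 (i - 1), W j)ᶜ v ⊆ W i)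
    (hsmall : ∀ i, 1 ≤ i → ∀ v ∈ (⋃ j ∈ Finset.Icc 1 (i - 1), W j)ᶜ,
      (AncIn E (⋃ j ∈ Finset.Icc 1 (i - 1), W j)ᶜ v).ncard ≤ ρ → v ∈ W i) :
    (⋃ j ∈ Finset.Icc 1 L, W j) = Set.univ :=
  peeling_covers_in_L_phases_general E hacyc ρ hρ L hLmax W hsmall
end
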